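/- arXiv:2605.09333 — 2 statements merged into one kernel-verified Lean document; each statement's English description precedes it below -/
import Mathlib

section
/- Every element of the form x = −(1/2)·1 + v, where v ∈ 𝕆 is purely imaginary (conj v = −v) and n(v) = 3/4, is an idempotent for the para-octonionic product: x ∙ x = x. -/
/-!
A purely imaginary octonion `v` squares to `-n(v)·1`, and real multiples of `1` commute and
associate with everything. Since `conj x = -½·1 - v`, we get
`x ∙ x = (conj x)² = ¼·1 + v + v·v = ¼·1 + v - ¾·1 = x`.
-/

noncomputable section

open Quaternion

/-- The octonions as the Cayley–Dickson double of the quaternions. -/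
abbrev Octo : Type := ℍ[ℝ] × ℍ[ℝ]

/-- Octonionic product: `(a,b)·(c,d) = (a c − (conj d) b, d a + b (conj c))`. -/
def omul (x y : Octo) : Octo :=
  (x.1 * y.1 - star y.2 * x.2, y.2 * x.1 + x.2 * star y.1)

/-- Octonionic conjugation: `conj (a,b) = (conj a, −b)`. -/
def oconj (x : Octo) : Octo := (star x.1, -x.2)

def oone : Octo := (1, 0)
def oi : Octo := ((⟨0,1,0,0⟩ : ℍ[ℝ]), 0)
def oj : Octo := ((⟨0,0,1,0⟩ : ℍ[ℝ]), 0)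
def ok : Octo := ((⟨0,0,0,1⟩ : ℍ[ℝ]), 0)
def ol : Octo := (0, 1)

/-- `h = (i + j + k + l)/2`. -/
def oh : Octo := (2⁻¹ : ℝ) • (oi + oj + ok + ol)

/-- The Coxeter–Dickson basis `b₀,…,b₇`. -/
def b : Fin 8 → Octo :=
  ![oone, oi, oj, ok, oh, omul oi oh, omul oj oh, omul ok oh]

/-- The Coxeter–Dickson order: the ℤ-span of `b₀,…,b₇`. -/
def CD : Submodule ℤ Octo := Submodule.span ℤ (Set.range b)

/-- The norm: the sum of the squares of the eight real coordinates. -/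
def onorm (x : Octo) : ℝ :=
  x.1.re^2 + x.1.imI^2 + x.1.imJ^2 + x.1.imK^2 +
  x.2.re^2 + x.2.imI^2 + x.2.imJ^2 + x.2.imK^2

/-- The bilinear form `⟨x,y⟩`, obtained by polarization of the norm,
so that `x·(conj y) + y·(conj x) = ⟨x,y⟩·1`. -/
def binner (x y : Octo) : ℝ := onorm (x + y) - onorm x - onorm y

/-- The para-octonionic product `x ∙ y = (conj x)·(conj y)`. -/
def pmul (x y : Octo) : Octo := omul (oconj x) (oconj y)

theorem onorm_eq_normSq_add_normSq (x : Octo) :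
    onorm x = normSq x.1 + normSq x.2 := by
  simp only [onorm, normSq_def']
  ring

theorem onorm_neg (x : Octo) : onorm (-x) = onorm x := by
  simp [onorm_eq_normSq_add_normSq]

theorem oconj_neg (x : Octo) : oconj (-x) = -oconj x := by
  ext <;> simp [oconj]

theorem oconj_smul_oone_add (a : ℝ) (v : Octo) :
    oconj (a • oone + v) = a • oone + oconj v := by
  ext <;> simp [oconj, oone]

theorem omul_smul_oone_add_smul_oone_add (a b : ℝ) (v w : Octo) :
    omul (a • oone + v) (b • oone + w) = (a * b) • oone + a • w + b • v + omul v w := by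
  ext <;> simp [omul, oone] <;> ring

theorem omul_self_of_oconj_eq_neg {v : Octo} (hv : oconj v = -v) :
    omul v v = -onorm v • oone := by
  obtain ⟨a, b⟩ := v
  have ha : star a = -a := congrArg Prod.fst hv
  have hsq : a * a = -((normSq a : ℝ) : ℍ[ℝ]) := by
    rw [← self_mul_star, ha, mul_neg, neg_neg]
  ext1
  · simp [omul, oone, onorm_eq_normSq_add_normSq, hsq, star_mul_self,
      ← Algebra.algebraMap_eq_smul_one]
    abel
  · simp [omul, oone, ha]

/-- every `x = −(1/2)·1 + v` with `v` purely imaginary of norm `3/4`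
is a para-octonionic idempotent. -/
theorem para_idempotent_sphere (v : Octo) (hv : oconj v = -v)
    (hn : onorm v = 3 / 4) :
    pmul (-(2⁻¹ : ℝ) • oone + v) (-(2⁻¹ : ℝ) • oone + v)
      = -(2⁻¹ : ℝ) • oone + v := by
  have hneg : oconj (-v) = -(-v) := by rw [oconj_neg, hv]
  calc pmul (-(2⁻¹ : ℝ) • oone + v) (-(2⁻¹ : ℝ) • oone + v)
      = omul (-(2⁻¹ : ℝ) • oone + -v) (-(2⁻¹ : ℝ) • oone + -v) := by
        rw [pmul, oconj_smul_oone_add, hv]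
    _ = (4⁻¹ : ℝ) • oone + v + omul (-v) (-v) := by
        rw [omul_smul_oone_add_smul_oone_add]; module
    _ = -(2⁻¹ : ℝ) • oone + v := by
        rw [omul_self_of_oconj_eq_neg hneg, onorm_neg, hn]; module

end
end

section
/- The norm, the bilinear form, and the relative trace take values in ℤ[√3] on the scaled Okubo order: for all x, y ∈ 𝒪₀ one has n(x) ∈ ℤ[√3], ⟨x, y⟩ ∈ ℤ[√3], and ⟨x, 1⟩ ∈ ℤ[√3]. -/
noncomputable section

open Quaternion

/-- The ring `ℤ[√3] = {m + n√3 : m, n ∈ ℤ}` as a subset of `ℝ`. -/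
def Zsqrt3 : Set ℝ := {x | ∃ m n : ℤ, x = (m : ℝ) + (n : ℝ) * Real.sqrt 3}

/-- The scaling exponents `(D₀,…,D₇) = (2,2,2,2,4,4,4,4)`. -/
def Dscale : Fin 8 → ℤ := ![2, 2, 2, 2, 4, 4, 4, 4]

/-- The scaled basis `uᵢ = Dᵢ·bᵢ`. -/
def u : Fin 8 → Octo := fun i => Dscale i • b i

/-- The scaled Okubo order `𝒪₀`: all `ℤ[√3]`-linear combinations of `u₀,…,u₇`. -/
def Ok0 : Set Octo :=
  {x | ∃ c : Fin 8 → ℝ, (∀ i, c i ∈ Zsqrt3) ∧ x = ∑ i, c i • u i}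

/-! The elements `u₀,…,u₃ = 2, 2i, 2j, 2k` have integer coordinates, and `u₄ = 2·(2h)` and
`u₅, u₆, u₇ = 2·(x·(2h))` for `x = i, j, k`, where `2h = i + j + k + l`. Octonions whose eight coordinates
lie in a subring `S ⊆ ℝ` form an `S`-module closed under the product, so every element of `𝒪₀` has
its coordinates in `ℤ[√3]`; the norm is a sum of squares of coordinates and `⟨x, y⟩` its
polarization. -/

def zsqrt3Subring : Subring ℝ :=
  (Zsqrtd.lift ⟨√3, Real.mul_self_sqrt (by norm_num)⟩ : ℤ√3 →+* ℝ).range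

theorem mem_zsqrt3Subring {x : ℝ} : x ∈ zsqrt3Subring ↔ x ∈ Zsqrt3 :=
  ⟨fun ⟨z, hz⟩ => ⟨z.re, z.im, hz.symm⟩, fun ⟨m, n, h⟩ => ⟨⟨m, n⟩, h.symm⟩⟩

def quatOver (S : Subring ℝ) : Submodule S ℍ[ℝ] where
  carrier := {q | q.re ∈ S ∧ q.imI ∈ S ∧ q.imJ ∈ S ∧ q.imK ∈ S}
  add_mem' := fun ⟨h₁, h₂, h₃, h₄⟩ ⟨h₁', h₂', h₃', h₄'⟩ =>
    ⟨add_mem h₁ h₁', add_mem h₂ h₂', add_mem h₃ h₃', add_mem h₄ h₄'⟩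
  zero_mem' := ⟨zero_mem S, zero_mem S, zero_mem S, zero_mem S⟩
  smul_mem' := fun c _ ⟨h₁, h₂, h₃, h₄⟩ =>
    ⟨mul_mem c.2 h₁, mul_mem c.2 h₂, mul_mem c.2 h₃, mul_mem c.2 h₄⟩

def octoOver (S : Subring ℝ) : Submodule S Octo := (quatOver S).prod (quatOver S)

theorem omul_smul_right (c : ℝ) (x y : Octo) : omul x (c • y) = c • omul x y := by
  ext1 <;> simp only [omul, Prod.smul_fst, Prod.smul_snd, Quaternion.star_smul, mul_smul_comm,
    smul_mul_assoc, smul_sub, smul_add]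

theorem two_smul_oh : (2 : ℝ) • oh = oi + oj + ok + ol := by
  simp [oh, smul_smul]

section Over

variable {S : Subring ℝ}

theorem mem_quatOver {q : ℍ[ℝ]} :
    q ∈ quatOver S ↔ q.re ∈ S ∧ q.imI ∈ S ∧ q.imJ ∈ S ∧ q.imK ∈ S := Iff.rfl

theorem mul_mem_quatOver {p q : ℍ[ℝ]} (hp : p ∈ quatOver S) (hq : q ∈ quatOver S) :
    p * q ∈ quatOver S := by
  obtain ⟨h₁, h₂, h₃, h₄⟩ := hp
  obtain ⟨h₅, h₆, h₇, h₈⟩ := hq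
  simp only [mem_quatOver, Quaternion.re_mul, Quaternion.imI_mul, Quaternion.imJ_mul,
    Quaternion.imK_mul]
  aesop (add safe apply [add_mem, sub_mem, mul_mem])

theorem star_mem_quatOver {q : ℍ[ℝ]} (hq : q ∈ quatOver S) : star q ∈ quatOver S := by
  simpa only [mem_quatOver, Quaternion.re_star, Quaternion.imI_star, Quaternion.imJ_star,
    Quaternion.imK_star, neg_mem_iff] using hq

theorem omul_mem_octoOver {x y : Octo} (hx : x ∈ octoOver S) (hy : y ∈ octoOver S) :
    omul x y ∈ octoOver S :=
  ⟨sub_mem (mul_mem_quatOver hx.1 hy.1) (mul_mem_quatOver (star_mem_quatOver hy.2) hx.2),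
    add_mem (mul_mem_quatOver hy.2 hx.1) (mul_mem_quatOver hx.2 (star_mem_quatOver hy.1))⟩

theorem onorm_mem {x : Octo} (hx : x ∈ octoOver S) : onorm x ∈ S := by
  obtain ⟨⟨h₁, h₂, h₃, h₄⟩, h₅, h₆, h₇, h₈⟩ := hx
  unfold onorm
  aesop (add safe apply [add_mem, pow_mem])

theorem binner_mem {x y : Octo} (hx : x ∈ octoOver S) (hy : y ∈ octoOver S) :
    binner x y ∈ S :=
  sub_mem (sub_mem (onorm_mem (add_mem hx hy)) (onorm_mem hx)) (onorm_mem hy)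

theorem oone_mem_octoOver : oone ∈ octoOver S :=
  ⟨⟨one_mem S, zero_mem S, zero_mem S, zero_mem S⟩, zero_mem _⟩

theorem u_mem_octoOver (i : Fin 8) : u i ∈ octoOver S := by
  have hi : oi ∈ octoOver S := ⟨⟨zero_mem S, one_mem S, zero_mem S, zero_mem S⟩, zero_mem _⟩
  have hj : oj ∈ octoOver S := ⟨⟨zero_mem S, zero_mem S, one_mem S, zero_mem S⟩, zero_mem _⟩
  have hk : ok ∈ octoOver S := ⟨⟨zero_mem S, zero_mem S, zero_mem S, one_mem S⟩, zero_mem _⟩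
  have hl : ol ∈ octoOver S := ⟨zero_mem _, one_mem S, zero_mem S, zero_mem S, zero_mem S⟩
  have hh : (2 : ℝ) • oh ∈ octoOver S := two_smul_oh ▸ add_mem (add_mem (add_mem hi hj) hk) hl
  have h4 (x : Octo) : (4 : ℤ) • x = (2 : ℤ) • (2 : ℝ) • x := by
    rw [← Int.cast_smul_eq_zsmul ℝ, ← Int.cast_smul_eq_zsmul ℝ, smul_smul]
    norm_num
  have hmul {x : Octo} (hx : x ∈ octoOver S) : (4 : ℤ) • omul x oh ∈ octoOver S := by
    rw [h4, ← omul_smul_right]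
    exact zsmul_mem (omul_mem_octoOver hx hh) 2
  fin_cases i
  · exact zsmul_mem oone_mem_octoOver 2
  · exact zsmul_mem hi 2
  · exact zsmul_mem hj 2
  · exact zsmul_mem hk 2
  · show (4 : ℤ) • oh ∈ octoOver S
    exact (h4 oh).symm ▸ zsmul_mem hh 2
  · exact hmul hi
  · exact hmul hj
  · exact hmul hk

end Over

theorem ok0_subset_octoOver : Ok0 ⊆ octoOver zsqrt3Subring := by
  rintro _ ⟨c, hc, rfl⟩
  exact Submodule.sum_mem _ fun i _ =>
    (octoOver _).smul_mem ⟨c i, mem_zsqrt3Subring.2 (hc i)⟩ (u_mem_octoOver i)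

/-- on the scaled Okubo order the norm, the bilinear form, and the
relative trace `⟨x,1⟩` take values in `ℤ[√3]`. -/
theorem okubo_scaled_order_norm_trace :
    ∀ x ∈ Ok0, ∀ y ∈ Ok0,
      onorm x ∈ Zsqrt3 ∧ binner x y ∈ Zsqrt3 ∧ binner x oone ∈ Zsqrt3 := by
  intro x hx y hy
  have hx' := ok0_subset_octoOver hx
  have hy' := ok0_subset_octoOver hy
  simp only [← mem_zsqrt3Subring]
  exact ⟨onorm_mem hx', binner_mem hx' hy', binner_mem hx' oone_mem_octoOver⟩

end
end
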